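/- arXiv:2604.12423 — 5 statements merged into one kernel-verified Lean document; each statement's English description precedes it below -/
import Mathlib

section
/- Let a, b, c > 0, λ = √(b/a)·c, and let f : ℝ → ℝ be C¹ with f'(t) ≤ -a·f(t)² + b·c² for all t > 0 and f(0) < -λ. Then f is strictly decreasing on (0, ∞), i.e., f'(t) < 0 for all t > 0. -/
open Real

theorem riccati_decreasing (a b c : ℝ) (ha : 0 < a) (hb : 0 < b) (hc : 0 < c)
    (lam : ℝ) (hlam : lam = Real.sqrt (b / a) * c)
    (f : ℝ → ℝ) (hf : ContDiff ℝ 1 f)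
    (hineq : ∀ t > 0, deriv f t ≤ -a * (f t) ^ 2 + b * c ^ 2)
    (h0 : f 0 < -lam) :
    ∀ t > 0, deriv f t < 0 := by
  have hba : 0 < b / a := div_pos hb ha
  have hlam_pos : 0 < lam := by
    rw [hlam]
    exact mul_pos (Real.sqrt_pos.mpr hba) hc
  have hlam_sq : a * lam ^ 2 = b * c ^ 2 := by
    rw [hlam, mul_pow, Real.sq_sqrt hba.le]
    field_simp
  have hcont : Continuous f := hf.continuous
  -- key step: f stays strictly below -lam on [0, ∞)
  have key : ∀ t, 0 ≤ t → f t < -lam := by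
    by_contra h
    push_neg at h
    obtain ⟨t, ht0, ht⟩ := h
    -- IVT gives a first hitting time
    have hivt : ∃ s ∈ Set.Icc (0:ℝ) t, f s = -lam :=
      intermediate_value_Icc ht0 hcont.continuousOn ⟨h0.le, ht⟩
    set S : Set ℝ := Set.Icc (0:ℝ) t ∩ {s | f s = -lam} with hS
    have hSne : S.Nonempty := by
      obtain ⟨s, hs1, hs2⟩ := hivt
      exact ⟨s, hs1, hs2⟩
    have hSclosed : IsClosed S :=
      isClosed_Icc.inter (isClosed_eq hcont continuous_const)
    have hSbdd : BddBelow S := ⟨0, fun x hx => hx.1.1⟩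
    set s₀ := sInf S with hs₀def
    have hs₀mem : s₀ ∈ S := hSclosed.csInf_mem hSne hSbdd
    have hfs₀ : f s₀ = -lam := hs₀mem.2
    have hs₀nonneg : 0 ≤ s₀ := hs₀mem.1.1
    have hs₀t : s₀ ≤ t := hs₀mem.1.2
    have hs₀pos : 0 < s₀ := by
      rcases hs₀nonneg.lt_or_eq with h' | h'
      · exact h'
      · exfalso; rw [← h'] at hfs₀; linarith
    -- before s₀, f < -lam
    have hbelow : ∀ u, 0 ≤ u → u < s₀ → f u < -lam := by
      intro u hu0 hus₀
      by_contra hcon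
      push_neg at hcon
      have : ∃ s ∈ Set.Icc (0:ℝ) u, f s = -lam :=
        intermediate_value_Icc hu0 hcont.continuousOn ⟨h0.le, hcon⟩
      obtain ⟨s, hs1, hs2⟩ := this
      have hsS : s ∈ S := ⟨⟨hs1.1, le_trans hs1.2 (le_trans hus₀.le hs₀t)⟩, hs2⟩
      have : s₀ ≤ s := csInf_le hSbdd hsS
      linarith [hs1.2]
    -- f is strictly decreasing on [0, s₀]
    have hanti : StrictAntiOn f (Set.Icc 0 s₀) := by
      apply strictAntiOn_of_deriv_neg (convex_Icc 0 s₀) hcont.continuousOn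
      intro x hx
      rw [interior_Icc] at hx
      have hfx : f x < -lam := hbelow x hx.1.le hx.2
      have hsq : lam ^ 2 < (f x) ^ 2 := by nlinarith
      have := hineq x hx.1
      nlinarith
    have : f s₀ < f 0 :=
      hanti (Set.left_mem_Icc.mpr hs₀nonneg) ⟨hs₀nonneg, le_refl _⟩ hs₀pos
    rw [hfs₀] at this
    linarith
  -- conclude
  intro t ht
  have hft : f t < -lam := key t ht.le
  have hsq : lam ^ 2 < (f t) ^ 2 := by nlinarith
  have := hineq t ht
  nlinarith
end

section
/- Let v₀ be defined by v₀(x) = p₀q₀eˣ for x < -q₀, v₀(x) = -p₀e^{-q₀}x for -q₀ ≤ x ≤ q₀, and v₀(x) = -p₀q₀e^{-x} for x > q₀, with p₀ > 0 and q₀ > 0. Then the Fourier transform of v₀ satisfies v̂₀(ξ) = 2i p₀ e^{-q₀} ( q₀ sin(q₀ξ)/(1+ξ²) + sin(q₀ξ)/ξ² − q₀ cos(q₀ξ)/((1+ξ²)ξ) ) for all ξ ≠ 0. -/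
/-!
On each of the three intervals where it is defined, `v₀` times `exp (c x)` is a multiple of
`exp (a x)` or of `x exp (c x)`, both of which have elementary antiderivatives; for
`|Re c| < 1` the tails converge, which gives `∫ exp (c x) v₀ x dx` in closed form. At
`c = -iξ` the exponentials `exp (±iqξ)` combine into `cos (qξ)` and `sin (qξ)`, and
`1 / (1 ∓ iξ) = (1 ± iξ) / (1 + ξ²)` turns all denominators real.
-/

open Real MeasureTheory Complex

/-- The anti-symmetric peakon-antipeakon profile. -/
noncomputable def v0 (p q : ℝ) : ℝ → ℝ := fun x =>
  if x < -q then p * q * Real.exp x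
  else if x ≤ q then -p * Real.exp (-q) * x
  else -p * q * Real.exp (-x)

open Set

theorem hasDerivAt_ofReal_mul_cexp_antideriv {c : ℂ} (hc : c ≠ 0) (x : ℝ) :
    HasDerivAt (fun y : ℝ => (c * y - 1) / c ^ 2 * cexp (c * y)) (x * cexp (c * x)) x := by
  have hexp : HasDerivAt (fun y : ℝ => cexp (c * y)) (c * cexp (c * x)) x := by
    simpa [mul_comm] using ((hasDerivAt_id (x : ℂ)).const_mul c).cexp.comp_ofReal
  have hlin : HasDerivAt (fun y : ℝ => (c * y - 1) / c ^ 2) (c / c ^ 2) x := by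
    simpa using
      ((((hasDerivAt_id (x : ℂ)).const_mul c).sub_const 1).div_const (c ^ 2)).comp_ofReal
  refine (hlin.mul hexp).congr_deriv ?_
  field_simp
  ring

theorem integral_ofReal_mul_exp_mul_complex {c : ℂ} (hc : c ≠ 0) (a b : ℝ) :
    ∫ x in a..b, (x : ℂ) * cexp (c * x) =
      (c * b - 1) / c ^ 2 * cexp (c * b) - (c * a - 1) / c ^ 2 * cexp (c * a) :=
  intervalIntegral.integral_eq_sub_of_hasDerivAt
    (fun x _ => hasDerivAt_ofReal_mul_cexp_antideriv hc x)
    ((by fun_prop : Continuous fun x : ℝ => (x : ℂ) * cexp (c * x)).intervalIntegrable a b)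

theorem integral_eq_integral_Iic_add_intervalIntegral_add_integral_Ioi {E : Type*}
    [NormedAddCommGroup E] [NormedSpace ℝ E] {f : ℝ → E} {a b : ℝ} (hab : a ≤ b)
    (hleft : IntegrableOn f (Iic a)) (hmid : IntegrableOn f (Icc a b))
    (hright : IntegrableOn f (Ioi b)) :
    ∫ x, f x = (∫ x in Iic a, f x) + (∫ x in a..b, f x) + ∫ x in Ioi b, f x := by
  have hIic : IntegrableOn f (Iic b) := by
    simpa [Iic_union_Icc_eq_Iic hab] using hleft.union hmid
  rw [← intervalIntegral.integral_Iic_add_Ioi hIic hright,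
    ← intervalIntegral.integral_Iic_sub_Iic hleft hIic]
  abel

section Profile

variable {p q x : ℝ}

theorem v0_of_le (hq : 0 ≤ q) (hx : x ≤ -q) : v0 p q x = p * q * Real.exp x := by
  rcases hx.lt_or_eq with hx | rfl
  · simp [v0, hx]
  · simp [v0, show -q ≤ q by linarith]
    ring

theorem v0_of_mem_Icc (hx : x ∈ Icc (-q) q) : v0 p q x = -p * Real.exp (-q) * x := by
  simp [v0, hx.1.not_gt, hx.2]

theorem v0_of_gt (hq : 0 ≤ q) (hx : q < x) : v0 p q x = -p * q * Real.exp (-x) := by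
  simp [v0, hx.not_ge, show ¬ x < -q by linarith]

theorem eqOn_cexp_mul_v0_Iic (hq : 0 ≤ q) (c : ℂ) :
    EqOn (fun x : ℝ => cexp (c * x) * (v0 p q x : ℂ))
      (fun x : ℝ => (p * q : ℂ) * cexp ((1 + c) * x)) (Iic (-q)) := fun x hx => by
  dsimp only
  rw [v0_of_le hq hx, add_mul, one_mul, Complex.exp_add]
  push_cast
  ring

theorem eqOn_cexp_mul_v0_Icc (c : ℂ) :
    EqOn (fun x : ℝ => cexp (c * x) * (v0 p q x : ℂ))
      (fun x : ℝ => -(p * Real.exp (-q) : ℂ) * (x * cexp (c * x))) (Icc (-q) q) := fun x hx => by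
  dsimp only
  rw [v0_of_mem_Icc hx]
  push_cast
  ring

theorem eqOn_cexp_mul_v0_Ioi (hq : 0 ≤ q) (c : ℂ) :
    EqOn (fun x : ℝ => cexp (c * x) * (v0 p q x : ℂ))
      (fun x : ℝ => -(p * q : ℂ) * cexp ((c - 1) * x)) (Ioi q) := fun x hx => by
  dsimp only
  rw [v0_of_gt hq hx, sub_mul, one_mul, sub_eq_add_neg, Complex.exp_add]
  push_cast
  ring

end Profile

noncomputable def v0TransformFactor (q : ℝ) (c : ℂ) : ℂ :=
  q * cexp (-c * q) / (1 + c) + q * cexp (c * q) / (c - 1)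
    - ((c * q - 1) * cexp (c * q) + (c * q + 1) * cexp (-c * q)) / c ^ 2

theorem integral_cexp_mul_v0 {p q : ℝ} (hq : 0 ≤ q) {c : ℂ} (hc : c ≠ 0) (hre : |c.re| < 1) :
    ∫ x : ℝ, cexp (c * x) * (v0 p q x : ℂ) = p * Real.exp (-q) * v0TransformFactor q c := by
  obtain ⟨hlo, hhi⟩ := abs_lt.mp hre
  have hleft := eqOn_cexp_mul_v0_Iic (p := p) hq c
  have hmid := eqOn_cexp_mul_v0_Icc (p := p) (q := q) c
  have hright := eqOn_cexp_mul_v0_Ioi (p := p) hq c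
  have hplus : 0 < (1 + c).re := by simp only [add_re, one_re]; linarith
  have hminus : (c - 1).re < 0 := by simp only [sub_re, one_re]; linarith
  rw [integral_eq_integral_Iic_add_intervalIntegral_add_integral_Ioi (by linarith)
      (IntegrableOn.congr_fun ((integrableOn_exp_mul_complex_Iic hplus _).const_mul _)
        hleft.symm measurableSet_Iic)
      ((Continuous.integrableOn_Icc (by fun_prop)).congr_fun hmid.symm measurableSet_Icc)
      (IntegrableOn.congr_fun ((integrableOn_exp_mul_complex_Ioi hminus _).const_mul _)
        hright.symm measurableSet_Ioi),
    setIntegral_congr_fun measurableSet_Iic hleft, setIntegral_congr_fun measurableSet_Ioi hright,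
    intervalIntegral.integral_congr (by rwa [uIcc_of_le (by linarith)]),
    integral_const_mul, integral_const_mul, intervalIntegral.integral_const_mul,
    integral_exp_mul_complex_Iic hplus, integral_exp_mul_complex_Ioi hminus,
    integral_ofReal_mul_exp_mul_complex hc]
  have hexp_left : cexp ((1 + c) * ↑(-q)) = Real.exp (-q) * cexp (-c * q) := by
    rw [ofReal_exp, ← Complex.exp_add]
    push_cast
    ring_nf
  have hexp_right : cexp ((c - 1) * q) = Real.exp (-q) * cexp (c * q) := by
    rw [ofReal_exp, ← Complex.exp_add]
    push_cast
    ring_nf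
  have hplus_ne : 1 + c ≠ 0 := fun h => by simp [h] at hplus
  have hminus_ne : c - 1 ≠ 0 := fun h => by simp [h] at hminus
  rw [hexp_left, hexp_right, v0TransformFactor]
  push_cast
  field_simp
  ring

theorem v0TransformFactor_neg_I_mul (q : ℝ) {ξ : ℝ} (hξ : ξ ≠ 0) :
    v0TransformFactor q (-I * ξ) = 2 * I *
      (q * Real.sin (q * ξ) / (1 + ξ ^ 2) + Real.sin (q * ξ) / ξ ^ 2
        - q * Real.cos (q * ξ) / ((1 + ξ ^ 2) * ξ)) := by
  have hexp_pos : cexp (-I * ξ * q) = Real.cos (q * ξ) - Real.sin (q * ξ) * I := by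
    rw [show -I * ξ * q = ((-(q * ξ) : ℝ) : ℂ) * I by push_cast; ring, exp_ofReal_mul_I,
      Real.cos_neg, Real.sin_neg, ofReal_neg]
    ring
  have hexp_neg : cexp (-(-I * ξ) * q) = Real.cos (q * ξ) + Real.sin (q * ξ) * I := by
    rw [show -(-I * ξ) * q = ((q * ξ : ℝ) : ℂ) * I by push_cast; ring, exp_ofReal_mul_I]
  have hnorm : (1 + (ξ : ℂ) ^ 2) ≠ 0 := by exact_mod_cast (by positivity : (1 + ξ ^ 2 : ℝ) ≠ 0)
  have hξ' : (ξ : ℂ) ≠ 0 := by exact_mod_cast hξ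
  have hinv_left : 1 / (1 + -I * ξ) = (1 + I * ξ) / (1 + ξ ^ 2) := by
    rw [div_eq_div_iff (fun h => by simpa using congrArg re h) hnorm]
    linear_combination (ξ : ℂ) ^ 2 * I_sq
  have hinv_right : 1 / (-I * ξ - 1) = (I * ξ - 1) / (1 + ξ ^ 2) := by
    rw [div_eq_div_iff (fun h => by simpa using congrArg re h) hnorm]
    linear_combination (ξ : ℂ) ^ 2 * I_sq
  have hsq : (-I * ξ) ^ 2 = -(ξ : ℂ) ^ 2 := by linear_combination (ξ : ℂ) ^ 2 * I_sq
  rw [v0TransformFactor, hexp_pos, hexp_neg, div_eq_mul_one_div _ (1 + -I * ξ),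
    div_eq_mul_one_div _ (-I * ξ - 1), hinv_left, hinv_right, hsq]
  field_simp
  ring

theorem v0_fourier_general (p q : ℝ) (hq : 0 < q) :
    ∀ ξ : ℝ, ξ ≠ 0 →
      (∫ x : ℝ, Complex.exp (-Complex.I * x * ξ) * (v0 p q x : ℂ)) =
        2 * Complex.I * (p : ℂ) * (Real.exp (-q) : ℂ) *
          ((q * Real.sin (q * ξ) / (1 + ξ ^ 2) + Real.sin (q * ξ) / ξ ^ 2
            - q * Real.cos (q * ξ) / ((1 + ξ ^ 2) * ξ) : ℝ) : ℂ) := by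
  intro ξ hξ
  simp_rw [show ∀ x : ℝ, -I * x * ξ = -I * ξ * x from fun x => by ring]
  rw [integral_cexp_mul_v0 hq.le (by simpa using hξ) (by simp), v0TransformFactor_neg_I_mul q hξ]
  push_cast
  ring

theorem v0_fourier (p q : ℝ) (hp : 0 < p) (hq : 0 < q) :
    ∀ ξ : ℝ, ξ ≠ 0 →
      (∫ x : ℝ, Complex.exp (-Complex.I * x * ξ) * (v0 p q x : ℂ)) =
        2 * Complex.I * (p : ℂ) * (Real.exp (-q) : ℂ) *
          ((q * Real.sin (q * ξ) / (1 + ξ ^ 2) + Real.sin (q * ξ) / ξ ^ 2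
            - q * Real.cos (q * ξ) / ((1 + ξ ^ 2) * ξ) : ℝ) : ℂ) :=
  v0_fourier_general p q hq
end

section
/- For q₀ ∈ (0, 1/4) and all η ∈ [π/4, π/2], one has sin(η)/η − q₀·η·sin(η)/(q₀²+η²) − q₀²·cos(η)/(q₀²+η²) ≥ 1/π. -/
open Real Set

/-! Jordan's inequality `sin η ≥ (2/π) η` bounds `sin η / η` from below by `2/π`; after factoring
`sin η / η` out of the first two terms this reduces the claim to the polynomial inequality
`2 q η² + π q² cos η ≤ q² + η²`, which holds with room to spare because `q < 1/4` and
`η² ≥ π²/16 > 9/16`. -/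

theorem Real.two_div_pi_le_sin_div_self {x : ℝ} (hx : 0 < x) (hxπ : x ≤ π / 2) :
    2 / π ≤ sin x / x := by
  rw [le_div_iff₀ hx]
  exact mul_le_sin hx.le hxπ

theorem two_mul_mul_sq_add_pi_mul_sq_mul_le {q η c : ℝ} (hq₀ : 0 < q) (hq₁ : q < 1 / 4)
    (hη : π / 4 ≤ η) (hc : c ≤ 1) :
    2 * q * η ^ 2 + π * q ^ 2 * c ≤ q ^ 2 + η ^ 2 := by
  have hπ : π < 3.15 := pi_lt_d2
  have hη₂ : 9 / 16 < η ^ 2 := by nlinarith [pi_gt_three]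
  have hqη : 2 * q * η ^ 2 ≤ η ^ 2 / 2 := by nlinarith
  have hc' : π * q ^ 2 * c ≤ π * q ^ 2 := mul_le_of_le_one_right (by positivity) hc
  nlinarith

theorem pointwise_lower_bound (q : ℝ) (hq : q ∈ Set.Ioo (0 : ℝ) (1 / 4)) :
    ∀ η ∈ Set.Icc (π / 4) (π / 2),
      Real.sin η / η - q * η * Real.sin η / (q ^ 2 + η ^ 2)
        - q ^ 2 * Real.cos η / (q ^ 2 + η ^ 2) ≥ 1 / π := by
  obtain ⟨hq₀, hq₁⟩ := hq
  rintro η ⟨hη₁, hη₂⟩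
  have hη₀ : 0 < η := by linarith [pi_pos]
  have hD : 0 < q ^ 2 + η ^ 2 := by positivity
  have hkey := two_mul_mul_sq_add_pi_mul_sq_mul_le hq₀ hq₁ hη₁ (cos_le_one η)
  have hfactor : 0 ≤ 1 - q * η ^ 2 / (q ^ 2 + η ^ 2) := by
    rw [sub_nonneg, div_le_one hD]
    nlinarith
  calc sin η / η - q * η * sin η / (q ^ 2 + η ^ 2) - q ^ 2 * cos η / (q ^ 2 + η ^ 2)
      = sin η / η * (1 - q * η ^ 2 / (q ^ 2 + η ^ 2)) - q ^ 2 * cos η / (q ^ 2 + η ^ 2) := by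
        field_simp
    _ ≥ 2 / π * (1 - q * η ^ 2 / (q ^ 2 + η ^ 2)) - q ^ 2 * cos η / (q ^ 2 + η ^ 2) := by
        gcongr ?_ * _ - _
        exact two_div_pi_le_sin_div_self hη₀ hη₂
    _ = 1 / π + (q ^ 2 + η ^ 2 - (2 * q * η ^ 2 + π * q ^ 2 * cos η)) / (π * (q ^ 2 + η ^ 2)) := by
        field_simp
        ring
    _ ≥ 1 / π := le_add_of_nonneg_right (div_nonneg (by linarith) (by positivity))
end

section
/- Let s ∈ (1/2, 3/2) and q₀ ∈ (0, 1/4). Define F = ∫₀^∞ η^{2s-2} | q₀(η sin η − q₀ cos η)/(q₀² + η²) + sin(η)/η |² dη. Then F ≥ (π^{2s-2}/(π²(2s−1)))·(2^{1-2s} − 4^{1-2s}). -/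
/-!
On `[π/4, π/2]` both summands inside the absolute value are favourable: the first is nonnegative
because `η sin η ≥ π/8 > 1/4 ≥ q cos η`, and Jordan's inequality `sin η ≥ 2η/π` makes the second at
least `1/π`. The integral over `(0, ∞)` therefore dominates `π⁻² ∫_{π/4}^{π/2} η^{2s-2} dη`, which
is computed explicitly. The integrand is integrable because the amplitude is bounded near `0`
and `O(1/η)` at infinity, while `2s - 2 ∈ (-1, 1)`.
-/

open Real Set MeasureTheory

noncomputable def amplitude (q η : ℝ) : ℝ :=
  q * (η * sin η - q * cos η) / (q ^ 2 + η ^ 2) + sin η / η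

lemma abs_mul_sin_sub_mul_cos_le (q η : ℝ) : |η * sin η - q * cos η| ≤ |η| + |q| :=
  calc |η * sin η - q * cos η| ≤ |η * sin η| + |q * cos η| := abs_sub _ _
    _ ≤ |η| + |q| := by
      rw [abs_mul, abs_mul]
      exact add_le_add (mul_le_of_le_one_right (abs_nonneg η) (abs_sin_le_one η))
        (mul_le_of_le_one_right (abs_nonneg q) (abs_cos_le_one η))

lemma abs_sin_div_self_le_one (η : ℝ) : |sin η / η| ≤ 1 := by
  rw [abs_div]
  exact div_le_of_le_mul₀ (abs_nonneg η) zero_le_one (by simpa using abs_sin_le_abs)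

lemma abs_sin_div_self_le_inv (η : ℝ) : |sin η / η| ≤ |η|⁻¹ := by
  rw [abs_div, div_eq_mul_inv]
  exact mul_le_of_le_one_left (inv_nonneg.2 (abs_nonneg η)) (abs_sin_le_one η)

lemma abs_amplitude_le (q η : ℝ) : |amplitude q η| ≤ 5 / 2 := by
  have first : |q * (η * sin η - q * cos η) / (q ^ 2 + η ^ 2)| ≤ 3 / 2 := by
    rw [abs_div, abs_mul, abs_of_nonneg (by positivity : 0 ≤ q ^ 2 + η ^ 2)]
    refine div_le_of_le_mul₀ (by positivity) (by norm_num) ?_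
    calc |q| * |η * sin η - q * cos η| ≤ |q| * (|η| + |q|) := by
          gcongr; exact abs_mul_sin_sub_mul_cos_le q η
      _ ≤ 3 / 2 * (q ^ 2 + η ^ 2) := by
          nlinarith [sq_nonneg (|q| - |η|), sq_abs q, sq_abs η]
  calc |amplitude q η| ≤ 3 / 2 + 1 :=
        (abs_add_le _ _).trans (add_le_add first (abs_sin_div_self_le_one η))
    _ = 5 / 2 := by norm_num

lemma abs_amplitude_le_div {q η : ℝ} (hη : 1 ≤ η) :
    |amplitude q η| ≤ (1 + |q| + q ^ 2) / η := by
  have hη₀ : 0 < η := one_pos.trans_le hη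
  have first : |q * (η * sin η - q * cos η) / (q ^ 2 + η ^ 2)| ≤ (|q| + q ^ 2) / η := by
    rw [abs_div, abs_mul, abs_of_pos (by positivity : 0 < q ^ 2 + η ^ 2),
      div_le_div_iff₀ (by positivity) hη₀]
    have hnum := abs_mul_sin_sub_mul_cos_le q η
    rw [abs_of_pos hη₀] at hnum
    calc |q| * |η * sin η - q * cos η| * η ≤ |q| * (η + |q|) * η := by gcongr
      _ ≤ (|q| + q ^ 2) * (q ^ 2 + η ^ 2) := by
          nlinarith [sq_abs q, abs_nonneg q, mul_le_mul_of_nonneg_left hη (sq_nonneg q),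
            mul_nonneg (abs_nonneg q) (sq_nonneg q), pow_nonneg (sq_nonneg q) 2]
  have second : |sin η / η| ≤ 1 / η := by
    simpa [abs_of_pos hη₀] using abs_sin_div_self_le_inv η
  calc |amplitude q η| ≤ (|q| + q ^ 2) / η + 1 / η :=
        (abs_add_le _ _).trans (add_le_add first second)
    _ = (1 + |q| + q ^ 2) / η := by ring

lemma inv_pi_le_amplitude {q η : ℝ} (hq : q ∈ Icc 0 (1 / 4)) (hη : η ∈ Icc (π / 4) (π / 2)) :
    π⁻¹ ≤ amplitude q η := by
  obtain ⟨hq₀, hq₁⟩ := hq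
  obtain ⟨hη₁, hη₂⟩ := hη
  have hη₀ : 0 < η := by linarith [pi_pos]
  have hjordan : 2 / π * η ≤ sin η := mul_le_sin hη₀.le hη₂
  have hsin : 1 / 2 ≤ sin η := by
    refine le_trans ?_ hjordan
    rw [div_mul_eq_mul_div, le_div_iff₀ pi_pos]
    linarith
  have first : 0 ≤ q * (η * sin η - q * cos η) / (q ^ 2 + η ^ 2) := by
    have hcos : q * cos η ≤ 1 / 4 := by nlinarith [cos_le_one η]
    have : π / 8 ≤ η * sin η := by nlinarith
    exact div_nonneg (mul_nonneg hq₀ (by linarith [pi_gt_three])) (by positivity)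
  have second : π⁻¹ ≤ sin η / η := by
    rw [le_div_iff₀ hη₀]
    refine le_trans ?_ hjordan
    rw [div_eq_mul_inv]
    nlinarith [inv_pos.2 pi_pos]
  unfold amplitude
  linarith

lemma continuousOn_amplitude (q : ℝ) : ContinuousOn (amplitude q) (Ioi 0) := by
  refine ContinuousOn.add ?_ ?_
  · exact ContinuousOn.div (by fun_prop) (by fun_prop) fun η (hη : 0 < η) ↦ by positivity
  · exact continuousOn_sin.div continuousOn_id fun η (hη : 0 < η) ↦ hη.ne'

lemma integrableOn_Ioi_rpow_mul_sq {h : ℝ → ℝ} {r A B : ℝ} (hr₀ : -1 < r) (hr₁ : r < 1)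
    (hh : ContinuousOn h (Ioi 0)) (h_small : ∀ η ∈ Ioc 0 1, |h η| ≤ A)
    (h_large : ∀ η ∈ Ioi 1, |h η| ≤ B / η) :
    IntegrableOn (fun η ↦ η ^ r * |h η| ^ 2) (Ioi 0) := by
  have hcont : ContinuousOn (fun η ↦ η ^ r * |h η| ^ 2) (Ioi 0) :=
    (continuousOn_id.rpow_const fun η hη ↦ Or.inl (ne_of_gt hη)).mul (hh.abs.pow 2)
  have hnorm : ∀ η ∈ Ioi (0 : ℝ), ‖η ^ r * |h η| ^ 2‖ = η ^ r * |h η| ^ 2 := fun η hη ↦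
    Real.norm_of_nonneg (mul_nonneg (rpow_nonneg (le_of_lt hη) r) (sq_nonneg _))
  rw [← Ioc_union_Ioi_eq_Ioi zero_le_one]
  refine IntegrableOn.union ?_ ?_
  · have hdom : IntegrableOn (fun η ↦ A ^ 2 * η ^ r) (Ioc 0 1) :=
      ((intervalIntegrable_iff_integrableOn_Ioc_of_le zero_le_one).1
        (intervalIntegral.intervalIntegrable_rpow' hr₀)).const_mul _
    refine hdom.mono' ((hcont.mono Ioc_subset_Ioi_self).aestronglyMeasurable measurableSet_Ioc)
      (ae_restrict_of_forall_mem measurableSet_Ioc fun η hη ↦ ?_)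
    rw [hnorm η hη.1, mul_comm]
    exact mul_le_mul_of_nonneg_right (pow_le_pow_left₀ (abs_nonneg _) (h_small η hη) 2)
      (rpow_nonneg hη.1.le r)
  · have hdom : IntegrableOn (fun η ↦ B ^ 2 * η ^ (r - 2)) (Ioi 1) :=
      (integrableOn_Ioi_rpow_of_lt (by linarith) one_pos).const_mul _
    have hsub : Ioi (1 : ℝ) ⊆ Ioi 0 := Ioi_subset_Ioi zero_le_one
    refine hdom.mono' ((hcont.mono hsub).aestronglyMeasurable measurableSet_Ioi)
      (ae_restrict_of_forall_mem measurableSet_Ioi fun η hη ↦ ?_)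
    have hη₀ : 0 < η := hsub hη
    rw [hnorm η hη₀, rpow_sub hη₀, rpow_two]
    calc η ^ r * |h η| ^ 2 ≤ η ^ r * (B / η) ^ 2 := by
          gcongr; exact h_large η hη
      _ = B ^ 2 * (η ^ r / η ^ 2) := by ring

lemma mul_integral_rpow_le_setIntegral_Ioi {f : ℝ → ℝ} {a b c r : ℝ} (ha : 0 ≤ a) (hab : a ≤ b)
    (hr : -1 < r) (hf : IntegrableOn f (Ioi 0)) (hf₀ : ∀ η ∈ Ioi 0, 0 ≤ f η)
    (hfc : ∀ η ∈ Ioc a b, c * η ^ r ≤ f η) :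
    c * ((b ^ (r + 1) - a ^ (r + 1)) / (r + 1)) ≤ ∫ η in Ioi 0, f η := by
  have hsub : Ioc a b ⊆ Ioi 0 := fun η hη ↦ ha.trans_lt hη.1
  calc c * ((b ^ (r + 1) - a ^ (r + 1)) / (r + 1))
      = ∫ η in Ioc a b, c * η ^ r := by
        rw [integral_const_mul, ← intervalIntegral.integral_of_le hab, integral_rpow (Or.inl hr)]
    _ ≤ ∫ η in Ioc a b, f η := by
        refine setIntegral_mono_on ?_ (hf.mono_set hsub) measurableSet_Ioc hfc
        exact ((intervalIntegrable_iff_integrableOn_Ioc_of_le hab).1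
          (intervalIntegral.intervalIntegrable_rpow' hr)).const_mul c
    _ ≤ ∫ η in Ioi 0, f η :=
        setIntegral_mono_set hf (ae_restrict_of_forall_mem measurableSet_Ioi hf₀)
          (Filter.Eventually.of_forall hsub)

lemma div_two_rpow_sub_div_four_rpow {x : ℝ} (hx : 0 ≤ x) (t : ℝ) :
    (x / 2) ^ t - (x / 4) ^ t = x ^ t * ((2 : ℝ) ^ (-t) - (4 : ℝ) ^ (-t)) := by
  rw [div_rpow hx zero_le_two, div_rpow hx zero_le_four, rpow_neg zero_le_two,
    rpow_neg zero_le_four]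
  ring

theorem F_lower_bound (s q : ℝ) (hs : s ∈ Set.Ioo (1 / 2 : ℝ) (3 / 2))
    (hq : q ∈ Set.Ioo (0 : ℝ) (1 / 4)) :
    (∫ η in Set.Ioi (0 : ℝ),
        η ^ (2 * s - 2) *
          |q * (η * Real.sin η - q * Real.cos η) / (q ^ 2 + η ^ 2)
            + Real.sin η / η| ^ 2) ≥
      π ^ (2 * s - 2) / (π ^ 2 * (2 * s - 1)) *
        ((2 : ℝ) ^ (1 - 2 * s) - (4 : ℝ) ^ (1 - 2 * s)) := by
  obtain ⟨hs₁, hs₂⟩ := hs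
  have hint : IntegrableOn (fun η ↦ η ^ (2 * s - 2) * |amplitude q η| ^ 2) (Ioi 0) :=
    integrableOn_Ioi_rpow_mul_sq (by linarith) (by linarith) (continuousOn_amplitude q)
      (fun η _ ↦ abs_amplitude_le q η) (fun η hη ↦ abs_amplitude_le_div (le_of_lt hη))
  have hlow : ∀ η ∈ Ioc (π / 4) (π / 2), π⁻¹ ^ 2 * η ^ (2 * s - 2) ≤
      η ^ (2 * s - 2) * |amplitude q η| ^ 2 := fun η hη ↦ by
    have := inv_pi_le_amplitude ⟨hq.1.le, hq.2.le⟩ (Ioc_subset_Icc_self hη)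
    rw [mul_comm]
    exact mul_le_mul_of_nonneg_left
      (pow_le_pow_left₀ (inv_nonneg.2 pi_pos.le) (this.trans (le_abs_self _)) 2)
      (rpow_nonneg (by linarith [pi_pos, hη.1]) _)
  have hbound := mul_integral_rpow_le_setIntegral_Ioi (by positivity) (by linarith [pi_pos])
    (by linarith) hint (fun η hη ↦ mul_nonneg (rpow_nonneg (le_of_lt hη) _) (sq_nonneg _)) hlow
  rw [show 2 * s - 2 + 1 = 2 * s - 1 by ring, div_two_rpow_sub_div_four_rpow pi_pos.le,
    neg_sub] at hbound
  refine le_trans ?_ hbound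
  have hD : (4 : ℝ) ^ (1 - 2 * s) ≤ 2 ^ (1 - 2 * s) :=
    rpow_le_rpow_of_nonpos two_pos (by norm_num) (by linarith)
  -- the stated constant is weaker than the computed one by a factor `π`
  have hπ : π ^ (2 * s - 2) ≤ π ^ (2 * s - 1) :=
    rpow_le_rpow_of_exponent_le (by linarith [pi_gt_three]) (by linarith)
  rw [inv_pow, ← div_eq_inv_mul, div_div, div_mul_eq_mul_div, mul_comm (2 * s - 1)]
  exact div_le_div_of_nonneg_right (mul_le_mul_of_nonneg_right hπ (sub_nonneg.2 hD))
    (mul_nonneg (sq_nonneg π) (by linarith))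
end

section
/- Let s ∈ (1/2, 3/2), p₀ > 0 and q₀ ∈ (0, 1/4), and let v₀ be the function v₀(x) = p₀q₀eˣ for x < -q₀, v₀(x) = -p₀e^{-q₀}x for |x| ≤ q₀, v₀(x) = -p₀q₀e^{-x} for x > q₀. Then there exists a constant C = C(s) > 0, independent of p₀ and q₀, such that C⁻¹ p₀ q₀^{3/2−s} ≤ ‖v₀‖_{H^s(ℝ)} ≤ C p₀ q₀^{3/2−s}. -/
/-!
Since `v0` is odd, its Fourier transform is `-i ∫ v0(x) sin(xξ) dx`, and integrating the
three pieces explicitly gives `|v̂0(ξ)| = 2 p e^{-q} |F(q, ξ)|` with `F = v0FourierShape`.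
For `ξ > 0` one has `|F| ≤ 3q/ξ` and `|F| ≤ 3/ξ²`; splitting `∫ ξ^{2s} F²` at `ξ = 1/q`
bounds it by a multiple of `q^{3-2s}` exactly when `1/2 < s < 3/2`. Conversely, on
`qξ ∈ [π/2, 5π/6]` the sine is at least `1/2` and the cosine term has the right sign, so
`F ≥ 1/(2ξ²)` there, and this window alone gives a lower bound of the same order. The `L²` part
is `O(pq)`, which is dominated by `p q^{3/2-s}` since `q < 1`.
-/

open Real MeasureTheory Set

/-- Fourier transform with the convention `f̂(ξ) = ∫ e^{-ixξ} f(x) dx`. -/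
noncomputable def fourierT (f : ℝ → ℝ) (ξ : ℝ) : ℂ :=
  ∫ x : ℝ, Complex.exp (-Complex.I * x * ξ) * (f x : ℂ)

/-- The inhomogeneous Sobolev norm `‖f‖_{H^s} = ‖f‖_{L²} + ‖|ξ|^s f̂‖_{L²}` (up to a constant). -/
noncomputable def HsNorm (s : ℝ) (f : ℝ → ℝ) : ℝ :=
  Real.sqrt (∫ x : ℝ, f x ^ 2) +
    Real.sqrt (∫ ξ : ℝ, |ξ| ^ (2 * s) * ‖fourierT f ξ‖ ^ 2)

lemma v0_neg (p : ℝ) {q : ℝ} (hq : 0 ≤ q) (x : ℝ) : v0 p q (-x) = -v0 p q x := by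
  unfold v0
  split_ifs <;> first | (exfalso; linarith) | ring_nf

lemma measurable_v0 (p q : ℝ) : Measurable (v0 p q) := by
  unfold v0
  refine Measurable.ite measurableSet_Iio (by fun_prop) ?_
  exact Measurable.ite measurableSet_Iic (by fun_prop) (by fun_prop)

lemma abs_v0_le {p q : ℝ} (hp : 0 ≤ p) (hq : 0 ≤ q) (x : ℝ) :
    |v0 p q x| ≤ p * q * exp (-|x|) := by
  unfold v0
  split_ifs with hl hr
  · rw [abs_of_neg (by linarith : x < 0), neg_neg, abs_of_nonneg (by positivity)]
  · have hx : |x| ≤ q := abs_le.2 ⟨by linarith, hr⟩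
    have he : exp (-q) ≤ exp (-|x|) := exp_le_exp.2 (by linarith)
    rw [abs_mul, abs_mul, abs_neg, abs_of_nonneg hp, abs_of_pos (exp_pos _)]
    calc p * exp (-q) * |x| ≤ p * exp (-|x|) * q := by gcongr
      _ = p * q * exp (-|x|) := by ring
  · rw [abs_of_pos (by linarith : 0 < x), abs_mul, abs_mul, abs_neg, abs_of_nonneg hp,
      abs_of_nonneg hq, abs_of_pos (exp_pos _)]

lemma integral_exp_neg_abs : ∫ x : ℝ, exp (-|x|) = 2 := by
  rw [integral_comp_abs (f := fun t => exp (-t)), integral_exp_neg_Ioi_zero, mul_one]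

lemma integrable_exp_neg_abs : Integrable fun x : ℝ => exp (-|x|) :=
  .of_integral_ne_zero (by rw [integral_exp_neg_abs]; norm_num)

lemma integrable_v0 {p q : ℝ} (hp : 0 ≤ p) (hq : 0 ≤ q) : Integrable (v0 p q) :=
  (integrable_exp_neg_abs.const_mul (p * q)).mono' (measurable_v0 p q).aestronglyMeasurable
    (.of_forall (abs_v0_le hp hq))

lemma integral_v0_sq_le {p q : ℝ} (hp : 0 ≤ p) (hq : 0 ≤ q) :
    ∫ x, v0 p q x ^ 2 ≤ 2 * (p * q) ^ 2 := by
  have hbound : ∀ x, v0 p q x ^ 2 ≤ (p * q) ^ 2 * exp (-|x|) := fun x => by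
    have he : exp (-|x|) ^ 2 ≤ exp (-|x|) :=
      pow_le_of_le_one (exp_pos _).le (exp_le_one_iff.2 (by simp)) two_ne_zero
    calc v0 p q x ^ 2 = |v0 p q x| ^ 2 := (sq_abs _).symm
      _ ≤ (p * q * exp (-|x|)) ^ 2 := by gcongr; exact abs_v0_le hp hq x
      _ = (p * q) ^ 2 * exp (-|x|) ^ 2 := by ring
      _ ≤ (p * q) ^ 2 * exp (-|x|) := by gcongr
  have hdom := integrable_exp_neg_abs.const_mul ((p * q) ^ 2)
  have hint : Integrable fun x => v0 p q x ^ 2 :=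
    hdom.mono' ((measurable_v0 p q).pow_const 2).aestronglyMeasurable
      (.of_forall fun x => by rw [Real.norm_of_nonneg (sq_nonneg _)]; exact hbound x)
  calc ∫ x, v0 p q x ^ 2 ≤ ∫ x, (p * q) ^ 2 * exp (-|x|) := integral_mono hint hdom hbound
    _ = 2 * (p * q) ^ 2 := by rw [integral_const_mul, integral_exp_neg_abs, mul_comm]

lemma integral_mul_cos_eq_zero_of_odd {f : ℝ → ℝ} (hodd : ∀ x, f (-x) = -f x) (ξ : ℝ) :
    ∫ x, f x * cos (x * ξ) = 0 := by
  have h := integral_neg_eq_self (fun x => f x * cos (x * ξ)) volume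
  simp only [hodd, neg_mul, cos_neg, integral_neg] at h
  linarith

lemma fourierT_eq_of_odd {f : ℝ → ℝ} (hf : Integrable f) (hodd : ∀ x, f (-x) = -f x)
    (ξ : ℝ) :
    fourierT f ξ = -((∫ x, f x * sin (x * ξ) : ℝ) : ℂ) * Complex.I := by
  have hcos : Integrable fun x => f x * cos (x * ξ) :=
    hf.mul_bdd (by fun_prop) (.of_forall fun x => by simpa using abs_cos_le_one (x * ξ))
  have hsin : Integrable fun x => f x * sin (x * ξ) :=
    hf.mul_bdd (by fun_prop) (.of_forall fun x => by simpa using abs_sin_le_one (x * ξ))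
  have hexp : ∀ x : ℝ, Complex.exp (-Complex.I * x * ξ) * (f x : ℂ)
      = ((f x * cos (x * ξ) : ℝ) : ℂ) - ((f x * sin (x * ξ) : ℝ) : ℂ) * Complex.I := by
    intro x
    rw [show -Complex.I * x * ξ = ((-(x * ξ) : ℝ) : ℂ) * Complex.I by push_cast; ring,
      Complex.exp_mul_I, ← Complex.ofReal_cos, ← Complex.ofReal_sin, cos_neg, sin_neg]
    push_cast
    ring
  unfold fourierT
  simp_rw [hexp]
  rw [integral_sub hcos.ofReal (hsin.ofReal.mul_const _), integral_mul_const,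
    integral_complex_ofReal, integral_complex_ofReal, integral_mul_cos_eq_zero_of_odd hodd]
  simp

lemma integral_mul_sin_mul {ξ : ℝ} (hξ : ξ ≠ 0) (q : ℝ) :
    ∫ x in (0)..q, x * sin (x * ξ) = sin (q * ξ) / ξ ^ 2 - q * cos (q * ξ) / ξ := by
  have hderiv : ∀ x : ℝ, HasDerivAt (fun y => sin (y * ξ) / ξ ^ 2 - y * cos (y * ξ) / ξ)
      (x * sin (x * ξ)) x := fun x => by
    have hlin : HasDerivAt (fun y : ℝ => y * ξ) ξ x := by
      simpa using (hasDerivAt_id x).mul_const ξ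
    refine ((hlin.sin.div_const (ξ ^ 2)).sub
      (((hasDerivAt_id x).mul hlin.cos).div_const ξ)).congr_deriv ?_
    simp only [id]
    field_simp
    ring
  rw [intervalIntegral.integral_eq_sub_of_hasDerivAt (fun x _ => hderiv x)
    ((by fun_prop : Continuous fun x : ℝ => x * sin (x * ξ)).intervalIntegrable _ _)]
  simp

lemma integral_Ioi_exp_neg_mul_sin_mul (q ξ : ℝ) :
    ∫ x in Ioi q, exp (-x) * sin (x * ξ)
      = exp (-q) * (sin (q * ξ) + ξ * cos (q * ξ)) / (1 + ξ ^ 2) := by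
  have hξ : (0 : ℝ) < 1 + ξ ^ 2 := by positivity
  have hderiv : ∀ x : ℝ, HasDerivAt
      (fun y => -exp (-y) * ((sin (y * ξ) + ξ * cos (y * ξ)) / (1 + ξ ^ 2)))
      (exp (-x) * sin (x * ξ)) x := fun x => by
    have hlin : HasDerivAt (fun y : ℝ => y * ξ) ξ x := by
      simpa using (hasDerivAt_id x).mul_const ξ
    refine (((hasDerivAt_neg x).exp.neg).mul
      ((hlin.sin.add (hlin.cos.const_mul ξ)).div_const (1 + ξ ^ 2))).congr_deriv ?_
    simp only [Pi.add_apply, Pi.neg_apply]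
    field_simp
    ring
  have hexp : IntegrableOn (fun x => exp (-x)) (Ioi q) := by
    simpa using exp_neg_integrableOn_Ioi q one_pos
  have hint : IntegrableOn (fun x => exp (-x) * sin (x * ξ)) (Ioi q) :=
    Integrable.mul_bdd hexp (by fun_prop)
      (.of_forall fun x => by simpa using abs_sin_le_one (x * ξ))
  have hbdd : Filter.IsBoundedUnder (· ≤ ·) Filter.atTop
      (norm ∘ fun y => (sin (y * ξ) + ξ * cos (y * ξ)) / (1 + ξ ^ 2)) := by
    refine Filter.isBoundedUnder_of ⟨(1 + |ξ|) / (1 + ξ ^ 2), fun y => ?_⟩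
    rw [Function.comp_apply, norm_div, Real.norm_of_nonneg hξ.le]
    gcongr
    calc ‖sin (y * ξ) + ξ * cos (y * ξ)‖ ≤ |sin (y * ξ)| + |ξ| * |cos (y * ξ)| := by
          rw [Real.norm_eq_abs, ← abs_mul]; exact abs_add_le _ _
      _ ≤ 1 + |ξ| * 1 := by gcongr <;> [exact abs_sin_le_one _; exact abs_cos_le_one _]
      _ = 1 + |ξ| := by ring
  have hlim : Filter.Tendsto
      (fun y => -exp (-y) * ((sin (y * ξ) + ξ * cos (y * ξ)) / (1 + ξ ^ 2)))
      Filter.atTop (nhds 0) := by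
    refine Filter.Tendsto.zero_mul_isBoundedUnder_le ?_ hbdd
    simpa using (tendsto_exp_neg_atTop_nhds_zero).neg
  rw [integral_Ioi_of_hasDerivAt_of_tendsto' (fun x _ => hderiv x) hint hlim]
  ring

noncomputable def v0FourierShape (q ξ : ℝ) : ℝ :=
  sin (q * ξ) * (1 / ξ ^ 2 + q / (1 + ξ ^ 2)) - q * cos (q * ξ) / (ξ * (1 + ξ ^ 2))

lemma v0FourierShape_neg (q ξ : ℝ) : v0FourierShape q (-ξ) = -v0FourierShape q ξ := by
  simp only [v0FourierShape, mul_neg, sin_neg, cos_neg, neg_sq, neg_mul, div_neg]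
  ring

lemma integral_v0_mul_sin {p q : ℝ} (hp : 0 ≤ p) (hq : 0 < q) {ξ : ℝ} (hξ : ξ ≠ 0) :
    ∫ x, v0 p q x * sin (x * ξ) = -2 * p * exp (-q) * v0FourierShape q ξ := by
  have hint : Integrable fun x => v0 p q x * sin (x * ξ) :=
    (integrable_v0 hp hq.le).mul_bdd (by fun_prop)
      (.of_forall fun x => by simpa using abs_sin_le_one (x * ξ))
  have heven : (fun x => v0 p q x * sin (x * ξ)) = fun x => v0 p q |x| * sin (|x| * ξ) := by
    ext x
    rcases abs_cases x with ⟨hx, -⟩ | ⟨hx, -⟩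
    · rw [hx]
    · rw [hx, v0_neg p hq.le, neg_mul x, sin_neg]; ring
  have hmid : ∫ x in Ioc 0 q, v0 p q x * sin (x * ξ)
      = -p * exp (-q) * (sin (q * ξ) / ξ ^ 2 - q * cos (q * ξ) / ξ) := by
    rw [setIntegral_congr_fun measurableSet_Ioc
      (g := fun x => -p * exp (-q) * (x * sin (x * ξ)))
      fun x hx => by simp [v0, not_lt.2 (by linarith [hx.1] : -q ≤ x), hx.2, mul_assoc],
      integral_const_mul, ← intervalIntegral.integral_of_le hq.le, integral_mul_sin_mul hξ]
  have htail : ∫ x in Ioi q, v0 p q x * sin (x * ξ)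
      = -p * q * (exp (-q) * (sin (q * ξ) + ξ * cos (q * ξ)) / (1 + ξ ^ 2)) := by
    rw [setIntegral_congr_fun measurableSet_Ioi
      (g := fun x => -p * q * (exp (-x) * sin (x * ξ)))
      fun x hx => by
        simp [v0, not_lt.2 (by linarith [hx.out] : -q ≤ x), not_le.2 hx.out, mul_assoc],
      integral_const_mul, integral_Ioi_exp_neg_mul_sin_mul]
  rw [heven, integral_comp_abs (f := fun t => v0 p q t * sin (t * ξ)),
    ← Ioc_union_Ioi_eq_Ioi hq.le, setIntegral_union (Ioc_disjoint_Ioi le_rfl) measurableSet_Ioi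
      hint.integrableOn hint.integrableOn, hmid, htail, v0FourierShape]
  field_simp
  ring

lemma norm_fourierT_v0 {p q : ℝ} (hp : 0 ≤ p) (hq : 0 < q) {ξ : ℝ} (hξ : ξ ≠ 0) :
    ‖fourierT (v0 p q) ξ‖ = 2 * p * exp (-q) * |v0FourierShape q ξ| := by
  rw [fourierT_eq_of_odd (integrable_v0 hp hq.le) (v0_neg p hq.le), integral_v0_mul_sin hp hq hξ]
  rw [← Complex.ofReal_neg, norm_mul, Complex.norm_I, mul_one, Complex.norm_real, norm_neg,
    Real.norm_eq_abs, abs_mul, abs_of_nonpos (by simp only [neg_mul, neg_nonpos]; positivity)]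
  ring

section FourierShapeBounds

variable {q t : ℝ}

lemma abs_v0FourierShape_le (hq : 0 ≤ q) (ht : 0 < t) :
    |v0FourierShape q t| ≤ |sin (q * t)| * (1 / t ^ 2 + q / (1 + t ^ 2))
      + q * |cos (q * t)| / (t * (1 + t ^ 2)) := by
  refine (abs_sub _ _).trans_eq ?_
  rw [abs_mul, abs_div, abs_mul, abs_of_nonneg hq,
    abs_of_nonneg (by positivity : 0 ≤ 1 / t ^ 2 + q / (1 + t ^ 2)),
    abs_of_pos (by positivity : 0 < t * (1 + t ^ 2))]

lemma abs_v0FourierShape_le_mul_div (hq : 0 ≤ q) (ht : 0 < t) :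
    |v0FourierShape q t| ≤ 3 * q / t := by
  have hsin : |sin (q * t)| ≤ q * t := by
    simpa [abs_of_nonneg (by positivity : 0 ≤ q * t)] using abs_sin_le_abs (x := q * t)
  have ht1 : t ≤ 1 + t ^ 2 := by nlinarith [sq_nonneg (t - 1)]
  calc |v0FourierShape q t|
      ≤ q * t * (1 / t ^ 2) + 1 * (q / (1 + t ^ 2)) + q * 1 / (t * 1) := by
        refine (abs_v0FourierShape_le hq ht).trans ?_
        rw [mul_add]
        gcongr
        · exact abs_sin_le_one _
        · exact abs_cos_le_one _
        · exact le_add_of_nonneg_right (sq_nonneg t)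
    _ ≤ q / t + q / t + q / t := by
        have hfirst : q * t * (1 / t ^ 2) = q / t := by field_simp
        have hsecond : q / (1 + t ^ 2) ≤ q / t := by gcongr
        rw [hfirst, one_mul, mul_one, mul_one]
        linarith
    _ = 3 * q / t := by ring

lemma abs_v0FourierShape_le_div_sq (hq0 : 0 ≤ q) (hq1 : q ≤ 1) (ht : 0 < t) :
    |v0FourierShape q t| ≤ 3 / t ^ 2 := by
  have ht1 : t ≤ 1 + t ^ 2 := by nlinarith [sq_nonneg (t - 1)]
  calc |v0FourierShape q t|
      ≤ 1 * (1 / t ^ 2 + 1 / t ^ 2) + 1 * 1 / (t * t) := by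
        refine (abs_v0FourierShape_le hq0 ht).trans ?_
        gcongr
        · exact abs_sin_le_one _
        · linarith
        · exact abs_cos_le_one _
    _ = 3 / t ^ 2 := by ring

lemma inv_two_mul_sq_le_v0FourierShape (hq : 0 ≤ q) (ht : 0 < t) (hlo : π / 2 ≤ q * t)
    (hhi : q * t ≤ 5 * π / 6) : 1 / (2 * t ^ 2) ≤ v0FourierShape q t := by
  have hsin : 1 / 2 ≤ sin (q * t) := by
    rw [← sin_pi_sub, ← sin_pi_div_six]
    exact sin_le_sin_of_le_of_le_pi_div_two (by linarith [pi_pos]) (by linarith) (by linarith)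
  have hcos : cos (q * t) ≤ 0 := cos_nonpos_of_pi_div_two_le_of_le hlo (by linarith [pi_pos])
  have hrest : 0 ≤ q * -cos (q * t) / (t * (1 + t ^ 2)) := by
    have := neg_nonneg.2 hcos
    positivity
  calc 1 / (2 * t ^ 2) = 1 / 2 * (1 / t ^ 2 + 0) := by ring
    _ ≤ sin (q * t) * (1 / t ^ 2 + q / (1 + t ^ 2)) := by gcongr; positivity
    _ ≤ v0FourierShape q t := by
        rw [mul_neg, neg_div] at hrest
        rw [v0FourierShape]
        linarith

end FourierShapeBounds

section PowerBounds

variable {g : ℝ → ℝ} {R A B a b : ℝ}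

lemma integrableOn_Ioi_zero_of_le_rpow (hg : AEStronglyMeasurable g (volume.restrict (Ioi 0)))
    (hR : 0 < R) (ha : -1 < a) (hb : b < -1) (hA : ∀ t ∈ Ioc 0 R, ‖g t‖ ≤ A * t ^ a)
    (hB : ∀ t ∈ Ioi R, ‖g t‖ ≤ B * t ^ b) : IntegrableOn g (Ioi 0) := by
  rw [← Ioc_union_Ioi_eq_Ioi hR.le]
  refine IntegrableOn.union ?_ ?_
  · refine Integrable.mono' (((intervalIntegrable_iff_integrableOn_Ioc_of_le hR.le).1
      (intervalIntegral.intervalIntegrable_rpow' ha)).const_mul A)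
      (hg.mono_set Ioc_subset_Ioi_self) ?_
    filter_upwards [ae_restrict_mem measurableSet_Ioc] with t ht using hA t ht
  · refine Integrable.mono' ((integrableOn_Ioi_rpow_of_lt hb hR).const_mul B)
      (hg.mono_set (Ioi_subset_Ioi hR.le)) ?_
    filter_upwards [ae_restrict_mem measurableSet_Ioi] with t ht using hB t ht

lemma setIntegral_Ioi_zero_le_of_le_rpow (hg : AEStronglyMeasurable g (volume.restrict (Ioi 0)))
    (hR : 0 < R) (ha : -1 < a) (hb : b < -1) (hA : ∀ t ∈ Ioc 0 R, ‖g t‖ ≤ A * t ^ a)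
    (hB : ∀ t ∈ Ioi R, ‖g t‖ ≤ B * t ^ b) :
    ∫ t in Ioi 0, g t ≤ A * (R ^ (a + 1) / (a + 1)) + B * (-R ^ (b + 1) / (b + 1)) := by
  have hint := integrableOn_Ioi_zero_of_le_rpow hg hR ha hb hA hB
  have hpowA : IntegrableOn (fun t => t ^ a) (Ioc 0 R) :=
    (intervalIntegrable_iff_integrableOn_Ioc_of_le hR.le).1
      (intervalIntegral.intervalIntegrable_rpow' ha)
  have hnear : ∫ t in Ioc 0 R, g t ≤ A * (R ^ (a + 1) / (a + 1)) := by
    calc ∫ t in Ioc 0 R, g t ≤ ∫ t in Ioc 0 R, A * t ^ a :=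
          setIntegral_mono_on (hint.mono_set Ioc_subset_Ioi_self) (hpowA.const_mul A)
            measurableSet_Ioc fun t ht => (le_abs_self _).trans (hA t ht)
      _ = A * (R ^ (a + 1) / (a + 1)) := by
          rw [integral_const_mul, ← intervalIntegral.integral_of_le hR.le,
            integral_rpow (.inl ha), zero_rpow (by linarith), sub_zero]
  have hfar : ∫ t in Ioi R, g t ≤ B * (-R ^ (b + 1) / (b + 1)) := by
    calc ∫ t in Ioi R, g t ≤ ∫ t in Ioi R, B * t ^ b :=
          setIntegral_mono_on (hint.mono_set (Ioi_subset_Ioi hR.le))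
            ((integrableOn_Ioi_rpow_of_lt hb hR).const_mul B)
            measurableSet_Ioi fun t ht => (le_abs_self _).trans (hB t ht)
      _ = B * (-R ^ (b + 1) / (b + 1)) := by
          rw [integral_const_mul, integral_Ioi_rpow_of_lt hb hR]
  rw [← Ioc_union_Ioi_eq_Ioi hR.le, setIntegral_union (Ioc_disjoint_Ioi le_rfl)
    measurableSet_Ioi (hint.mono_set Ioc_subset_Ioi_self) (hint.mono_set (Ioi_subset_Ioi hR.le))]
  exact add_le_add hnear hfar

end PowerBounds

lemma mul_sub_le_setIntegral_of_le_on_Icc {g : ℝ → ℝ} {s : Set ℝ} {a b c : ℝ}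
    (hs : MeasurableSet s) (hsub : Icc a b ⊆ s) (hint : IntegrableOn g s)
    (hg : ∀ t ∈ s, 0 ≤ g t) (hab : a ≤ b) (hc : ∀ t ∈ Icc a b, c ≤ g t) :
    c * (b - a) ≤ ∫ t in s, g t := by
  calc c * (b - a) = c * volume.real (Icc a b) := by
        rw [Real.volume_real_Icc_of_le hab]
    _ ≤ ∫ t in Icc a b, g t :=
        setIntegral_ge_of_const_le_real measurableSet_Icc (by simp) hc (hint.mono_set hsub)
    _ ≤ ∫ t in s, g t :=
        setIntegral_mono_set hint (ae_restrict_of_forall_mem hs hg) hsub.eventuallyLE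

lemma rpow_mul_sq_le_of_abs_le_div_pow {t y c x : ℝ} {k : ℕ} (ht : 0 < t)
    (h : |y| ≤ c / t ^ k) : t ^ x * y ^ 2 ≤ c ^ 2 * t ^ (x - 2 * k) := by
  have hc : 0 ≤ c / t ^ k := (abs_nonneg _).trans h
  calc t ^ x * y ^ 2 = t ^ x * |y| ^ 2 := by rw [sq_abs]
    _ ≤ t ^ x * (c / t ^ k) ^ 2 := by gcongr
    _ = c ^ 2 * t ^ (x - 2 * k) := by
        rw [rpow_sub ht, show (2 * k : ℝ) = ((2 * k : ℕ) : ℝ) by push_cast; ring,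
          rpow_natCast]
        field_simp
        ring

section FourierShapeEnergy

variable {s q : ℝ}

lemma aestronglyMeasurable_rpow_mul_v0FourierShape_sq (μ : Measure ℝ) :
    AEStronglyMeasurable (fun t => t ^ (2 * s) * v0FourierShape q t ^ 2) μ := by
  unfold v0FourierShape
  fun_prop

lemma norm_rpow_mul_v0FourierShape_sq_le_near (hq : 0 ≤ q) {t : ℝ} (ht : 0 < t) :
    ‖t ^ (2 * s) * v0FourierShape q t ^ 2‖ ≤ (3 * q) ^ 2 * t ^ (2 * s - 2) := by
  rw [Real.norm_of_nonneg (by positivity)]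
  simpa using rpow_mul_sq_le_of_abs_le_div_pow (x := 2 * s) (k := 1) ht
    (by simpa using abs_v0FourierShape_le_mul_div hq ht)

lemma norm_rpow_mul_v0FourierShape_sq_le_far (hq0 : 0 ≤ q) (hq1 : q ≤ 1) {t : ℝ}
    (ht : 0 < t) :
    ‖t ^ (2 * s) * v0FourierShape q t ^ 2‖ ≤ 3 ^ 2 * t ^ (2 * s - 4) := by
  rw [Real.norm_of_nonneg (by positivity)]
  convert rpow_mul_sq_le_of_abs_le_div_pow (x := 2 * s) ht
    (abs_v0FourierShape_le_div_sq hq0 hq1 ht) using 3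
  norm_num

lemma integrableOn_rpow_mul_v0FourierShape_sq (hs : s ∈ Ioo (1 / 2 : ℝ) (3 / 2)) (hq0 : 0 < q)
    (hq1 : q ≤ 1) : IntegrableOn (fun t => t ^ (2 * s) * v0FourierShape q t ^ 2) (Ioi 0) :=
  integrableOn_Ioi_zero_of_le_rpow (aestronglyMeasurable_rpow_mul_v0FourierShape_sq _)
    (inv_pos.2 hq0) (by linarith [hs.1]) (by linarith [hs.2])
    (fun _ ht => norm_rpow_mul_v0FourierShape_sq_le_near hq0.le ht.1)
    (fun _ ht => norm_rpow_mul_v0FourierShape_sq_le_far hq0.le hq1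
      ((inv_pos.2 hq0).trans ht))

lemma setIntegral_rpow_mul_v0FourierShape_sq_le (hs : s ∈ Ioo (1 / 2 : ℝ) (3 / 2))
    (hq0 : 0 < q) (hq1 : q ≤ 1) :
    ∫ t in Ioi 0, t ^ (2 * s) * v0FourierShape q t ^ 2
      ≤ 9 * (1 / (2 * s - 1) + 1 / (3 - 2 * s)) * q ^ (3 - 2 * s) := by
  have hs1 : 2 * s - 1 ≠ 0 := by linarith [hs.1]
  have hs3 : 2 * s - 3 ≠ 0 := by linarith [hs.2]
  have hnear : q ^ 2 * q⁻¹ ^ (2 * s - 1) = q ^ (3 - 2 * s) := by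
    rw [inv_rpow hq0.le, ← rpow_neg hq0.le, ← rpow_two, ← rpow_add hq0]
    ring_nf
  have hfar : q⁻¹ ^ (2 * s - 3) = q ^ (3 - 2 * s) := by
    rw [inv_rpow hq0.le, ← rpow_neg hq0.le, neg_sub]
  refine (setIntegral_Ioi_zero_le_of_le_rpow
    (aestronglyMeasurable_rpow_mul_v0FourierShape_sq _) (inv_pos.2 hq0) (by linarith [hs.1])
    (by linarith [hs.2])
    (fun _ ht => norm_rpow_mul_v0FourierShape_sq_le_near hq0.le ht.1)
    (fun _ ht => norm_rpow_mul_v0FourierShape_sq_le_far hq0.le hq1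
      ((inv_pos.2 hq0).trans ht))).trans_eq ?_
  rw [show 2 * s - 2 + 1 = 2 * s - 1 by ring, show 2 * s - 4 + 1 = 2 * s - 3 by ring, hfar,
    show (3 * q) ^ 2 * (q⁻¹ ^ (2 * s - 1) / (2 * s - 1))
      = 9 * (q ^ 2 * q⁻¹ ^ (2 * s - 1)) / (2 * s - 1) by ring, hnear,
    show (3 : ℝ) - 2 * s = -(2 * s - 3) by ring]
  field_simp
  ring

lemma le_setIntegral_rpow_mul_v0FourierShape_sq (hs : s ∈ Ioo (1 / 2 : ℝ) (3 / 2))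
    (hq0 : 0 < q) (hq1 : q ≤ 1) :
    π / 12 * (5 * π / 6) ^ (2 * s - 4) * q ^ (3 - 2 * s)
      ≤ ∫ t in Ioi 0, t ^ (2 * s) * v0FourierShape q t ^ 2 := by
  set a := π / 2 * q⁻¹ with ha_def
  set b := 5 * π / 6 * q⁻¹ with hb_def
  have ha : 0 < a := by positivity
  have hab : a ≤ b := mul_le_mul_of_nonneg_right (by linarith [pi_pos]) (inv_nonneg.2 hq0.le)
  have hlower :
      ∀ t ∈ Icc a b, b ^ (2 * s - 4) / 4 ≤ t ^ (2 * s) * v0FourierShape q t ^ 2 := by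
    intro t ⟨hat, htb⟩
    have ht : 0 < t := ha.trans_le hat
    have hshape := inv_two_mul_sq_le_v0FourierShape hq0.le ht
      (by rwa [← div_le_iff₀' hq0, div_eq_mul_inv])
      (by rwa [← le_div_iff₀' hq0, div_eq_mul_inv])
    calc b ^ (2 * s - 4) / 4 ≤ t ^ (2 * s - 4) / 4 :=
          div_le_div_of_nonneg_right (rpow_le_rpow_of_nonpos ht htb (by linarith [hs.2]))
            (by norm_num)
      _ = t ^ (2 * s) * (1 / (2 * t ^ 2)) ^ 2 := by
          rw [rpow_sub ht, rpow_ofNat]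
          field_simp
          ring
      _ ≤ t ^ (2 * s) * v0FourierShape q t ^ 2 := by gcongr
  refine le_of_eq_of_le ?_ (mul_sub_le_setIntegral_of_le_on_Icc measurableSet_Ioi
    (fun t ht => ha.trans_le ht.1) (integrableOn_rpow_mul_v0FourierShape_sq hs hq0 hq1)
    (fun t ht => mul_nonneg (rpow_nonneg (le_of_lt ht) _) (sq_nonneg _)) hab hlower)
  rw [mul_rpow (by positivity) (by positivity), inv_rpow hq0.le, ← rpow_neg hq0.le]
  have hpow : q ^ (-(2 * s - 4)) * q⁻¹ = q ^ (3 - 2 * s) := by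
    rw [← rpow_neg_one, ← rpow_add hq0]
    ring_nf
  rw [← hpow, ha_def, hb_def]
  ring

end FourierShapeEnergy

lemma integral_rpow_mul_norm_fourierT_v0_sq {p q : ℝ} (hp : 0 ≤ p) (hq : 0 < q) (s : ℝ) :
    ∫ ξ, |ξ| ^ (2 * s) * ‖fourierT (v0 p q) ξ‖ ^ 2
      = 8 * (p * exp (-q)) ^ 2 * ∫ t in Ioi 0, t ^ (2 * s) * v0FourierShape q t ^ 2 := by
  have hae : (fun ξ => |ξ| ^ (2 * s) * ‖fourierT (v0 p q) ξ‖ ^ 2) =ᵐ[volume]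
      fun ξ => (2 * p * exp (-q)) ^ 2 * (|ξ| ^ (2 * s) * v0FourierShape q |ξ| ^ 2) := by
    filter_upwards [Measure.ae_ne volume 0] with ξ hξ
    have heven : v0FourierShape q |ξ| ^ 2 = |v0FourierShape q ξ| ^ 2 := by
      rcases abs_cases ξ with ⟨h, -⟩ | ⟨h, -⟩ <;> simp [h, v0FourierShape_neg]
    rw [norm_fourierT_v0 hp hq hξ, heven]
    ring
  rw [integral_congr_ae hae, integral_const_mul,
    integral_comp_abs (f := fun t => t ^ (2 * s) * v0FourierShape q t ^ 2)]
  ring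

lemma sqrt_mul_sq_mul_rpow {c p q : ℝ} (hc : 0 ≤ c) (hp : 0 ≤ p) (hq : 0 ≤ q) (s : ℝ) :
    √(c * (p ^ 2 * q ^ (3 - 2 * s))) = √c * (p * q ^ ((3 : ℝ) / 2 - s)) := by
  rw [sqrt_mul hc, sqrt_mul (sq_nonneg p), sqrt_sq hp, sqrt_eq_rpow (q ^ _), ← rpow_mul hq]
  ring_nf

section SobolevNorm

variable {s p q : ℝ}

lemma HsNorm_v0_le (hs : s ∈ Ioo (1 / 2 : ℝ) (3 / 2)) (hp : 0 ≤ p) (hq0 : 0 < q)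
    (hq1 : q ≤ 1) :
    HsNorm s (v0 p q) ≤ (2 + √(8 * (9 * (1 / (2 * s - 1) + 1 / (3 - 2 * s)))))
      * (p * q ^ ((3 : ℝ) / 2 - s)) := by
  set K := 9 * (1 / (2 * s - 1) + 1 / (3 - 2 * s))
  have hK : 0 ≤ K := by
    have := one_div_pos.2 (by linarith [hs.1] : 0 < 2 * s - 1)
    have := one_div_pos.2 (by linarith [hs.2] : 0 < 3 - 2 * s)
    positivity
  have hq_le : q ≤ q ^ ((3 : ℝ) / 2 - s) := by
    simpa using rpow_le_rpow_of_exponent_ge hq0 hq1 (by linarith [hs.1] : (3 : ℝ) / 2 - s ≤ 1)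
  have hL2 : √(∫ x, v0 p q x ^ 2) ≤ 2 * (p * q ^ ((3 : ℝ) / 2 - s)) := by
    rw [sqrt_le_iff]
    refine ⟨by positivity, (integral_v0_sq_le hp hq0.le).trans ?_⟩
    have : p * q ≤ p * q ^ ((3 : ℝ) / 2 - s) := by gcongr
    nlinarith [mul_nonneg hp hq0.le]
  have hexp : (p * exp (-q)) ^ 2 ≤ p ^ 2 := by
    gcongr
    exact mul_le_of_le_one_right hp (exp_le_one_iff.2 (by linarith))
  have hF : √(∫ ξ, |ξ| ^ (2 * s) * ‖fourierT (v0 p q) ξ‖ ^ 2)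
      ≤ √(8 * K) * (p * q ^ ((3 : ℝ) / 2 - s)) := by
    rw [← sqrt_mul_sq_mul_rpow (by positivity) hp hq0.le]
    refine sqrt_le_sqrt ?_
    rw [integral_rpow_mul_norm_fourierT_v0_sq hp hq0]
    calc 8 * (p * exp (-q)) ^ 2 * ∫ t in Ioi 0, t ^ (2 * s) * v0FourierShape q t ^ 2
        ≤ 8 * p ^ 2 * (K * q ^ (3 - 2 * s)) := by
          gcongr
          · exact setIntegral_nonneg measurableSet_Ioi
              fun t ht => mul_nonneg (rpow_nonneg (le_of_lt ht) _) (sq_nonneg _)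
          · exact setIntegral_rpow_mul_v0FourierShape_sq_le hs hq0 hq1
      _ = 8 * K * (p ^ 2 * q ^ (3 - 2 * s)) := by ring
  unfold HsNorm
  linarith

lemma le_HsNorm_v0 (hs : s ∈ Ioo (1 / 2 : ℝ) (3 / 2)) (hp : 0 ≤ p) (hq0 : 0 < q)
    (hq1 : q ≤ 1 / 2) :
    √(2 * (π / 12 * (5 * π / 6) ^ (2 * s - 4))) * (p * q ^ ((3 : ℝ) / 2 - s))
      ≤ HsNorm s (v0 p q) := by
  set c := π / 12 * (5 * π / 6) ^ (2 * s - 4)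
  have hc : 0 ≤ c := by positivity
  have hexp : p ^ 2 / 4 ≤ (p * exp (-q)) ^ 2 := by
    have : 1 / 2 ≤ exp (-q) := by linarith [add_one_le_exp (-q)]
    calc p ^ 2 / 4 = (p * (1 / 2)) ^ 2 := by ring
      _ ≤ (p * exp (-q)) ^ 2 := by gcongr
  have hF : √(2 * c) * (p * q ^ ((3 : ℝ) / 2 - s))
      ≤ √(∫ ξ, |ξ| ^ (2 * s) * ‖fourierT (v0 p q) ξ‖ ^ 2) := by
    rw [← sqrt_mul_sq_mul_rpow (by positivity) hp hq0.le]
    refine sqrt_le_sqrt ?_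
    rw [integral_rpow_mul_norm_fourierT_v0_sq hp hq0]
    calc 2 * c * (p ^ 2 * q ^ (3 - 2 * s))
        = 8 * (p ^ 2 / 4) * (c * q ^ (3 - 2 * s)) := by ring
      _ ≤ 8 * (p * exp (-q)) ^ 2 * ∫ t in Ioi 0, t ^ (2 * s) * v0FourierShape q t ^ 2 := by
          gcongr
          exact le_setIntegral_rpow_mul_v0FourierShape_sq hs hq0 (by linarith)
  unfold HsNorm
  linarith [sqrt_nonneg (∫ x, v0 p q x ^ 2)]

end SobolevNorm

lemma inv_max_mul_le_and_le_max_mul {a b x y : ℝ} (ha : 0 < a) (hx : 0 ≤ x)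
    (hlow : a * x ≤ y) (hup : y ≤ b * x) :
    (max b a⁻¹)⁻¹ * x ≤ y ∧ y ≤ max b a⁻¹ * x :=
  ⟨(mul_le_mul_of_nonneg_right (inv_le_of_inv_le₀ ha (le_max_right _ _)) hx).trans hlow,
    hup.trans (mul_le_mul_of_nonneg_right (le_max_left _ _) hx)⟩

theorem v0_Hs_norm (s : ℝ) (hs : s ∈ Set.Ioo (1 / 2 : ℝ) (3 / 2)) :
    ∃ C > 0, ∀ p q : ℝ, 0 < p → q ∈ Set.Ioo (0 : ℝ) (1 / 4) →
      C⁻¹ * (p * q ^ ((3 : ℝ) / 2 - s)) ≤ HsNorm s (v0 p q) ∧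
        HsNorm s (v0 p q) ≤ C * (p * q ^ ((3 : ℝ) / 2 - s)) := by
  set c := √(2 * (π / 12 * (5 * π / 6) ^ (2 * s - 4)))
  set K := 2 + √(8 * (9 * (1 / (2 * s - 1) + 1 / (3 - 2 * s))))
  refine ⟨max K c⁻¹, lt_max_of_lt_left (by positivity), fun p q hp ⟨hq0, hq1⟩ => ?_⟩
  exact inv_max_mul_le_and_le_max_mul (by positivity) (by positivity)
    (le_HsNorm_v0 hs hp.le hq0 (by linarith)) (HsNorm_v0_le hs hp.le hq0 (by linarith))
end
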